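/- Let f, f̂ : ℝ^d_{++} → ℝ be convex and positively homogeneous of degree 1 (f(λp) = λf(p) for all λ > 0), and suppose f(p) = f̂(p) for every p in a set P ⊆ ℝ^d_{++}. Then f(p) = f̂(p) for every p in ℝ^d_{++} ∩ int(cl(⋃_{λ>0}{λq : q ∈ P})), where int and cl denote interior and closure. -/

import Mathlib

/-!
Convex functions are continuous on the open orthant, so two of them that agree on a set also
agree at every point of the orthant lying in its closure. Degree-1 homogeneity propagates
agreement from `P` to every positive multiple of a point of `P`, i.e. to the cone over `P`.
-/

/-- The strictly positive orthant of `ℝ^d`. -/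
def posOrthant (d : ℕ) : Set (EuclideanSpace ℝ (Fin d)) := {p | ∀ i, 0 < p i}

open Set

lemma isOpen_posOrthant (d : ℕ) : IsOpen (posOrthant d) := by
  have : posOrthant d = ⋂ i, {p : EuclideanSpace ℝ (Fin d) | 0 < p i} := by
    ext p; simp [posOrthant]
  rw [this]
  exact isOpen_iInter_of_finite fun i =>
    isOpen_lt continuous_const (EuclideanSpace.proj i).continuous

lemma smul_mem_posOrthant {d : ℕ} {l : ℝ} (hl : 0 < l) {p : EuclideanSpace ℝ (Fin d)}
    (hp : p ∈ posOrthant d) : l • p ∈ posOrthant d :=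
  fun i => by simpa using mul_pos hl (hp i)

lemma eqOn_posSMul_of_eqOn {E : Type*} [SMul ℝ E] {U P : Set E} {f g : E → ℝ}
    (hf : ∀ p ∈ U, ∀ l : ℝ, 0 < l → f (l • p) = l * f p)
    (hg : ∀ p ∈ U, ∀ l : ℝ, 0 < l → g (l • p) = l * g p)
    (hPU : P ⊆ U) (hfg : EqOn f g P) :
    EqOn f g {q | ∃ l : ℝ, 0 < l ∧ ∃ r ∈ P, q = l • r} := by
  rintro q ⟨l, hl, r, hr, rfl⟩
  rw [hf r (hPU hr) l hl, hg r (hPU hr) l hl, hfg hr]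

lemma ConvexOn.eqOn_inter_closure {E : Type*} [NormedAddCommGroup E] [NormedSpace ℝ E]
    [FiniteDimensional ℝ E] {U C : Set E} {f g : E → ℝ} (hU : IsOpen U)
    (hf : ConvexOn ℝ U f) (hg : ConvexOn ℝ U g) (hCU : C ⊆ U) (hfg : EqOn f g C) :
    EqOn f g (U ∩ closure C) :=
  hfg.of_subset_closure ((hf.continuousOn hU).mono inter_subset_left)
    ((hg.continuousOn hU).mono inter_subset_left) (subset_inter hCU subset_closure)
    inter_subset_right

theorem stmt3_general (d : ℕ)
    (f fhat : EuclideanSpace ℝ (Fin d) → ℝ)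
    (hfconv : ConvexOn ℝ (posOrthant d) f)
    (hfhatconv : ConvexOn ℝ (posOrthant d) fhat)
    (hfhom : ∀ p ∈ posOrthant d, ∀ l : ℝ, 0 < l → f (l • p) = l * f p)
    (hfhathom : ∀ p ∈ posOrthant d, ∀ l : ℝ, 0 < l → fhat (l • p) = l * fhat p)
    (P : Set (EuclideanSpace ℝ (Fin d))) (hPpos : P ⊆ posOrthant d)
    (hagree : ∀ p ∈ P, f p = fhat p) :
    ∀ p ∈ posOrthant d ∩ interior (closure {q : EuclideanSpace ℝ (Fin d) |
        ∃ l : ℝ, 0 < l ∧ ∃ r ∈ P, q = l • r}),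
      f p = fhat p := by
  have hcone_pos : {q | ∃ l : ℝ, 0 < l ∧ ∃ r ∈ P, q = l • r} ⊆ posOrthant d := by
    rintro q ⟨l, hl, r, hr, rfl⟩
    exact smul_mem_posOrthant hl (hPpos hr)
  have hcone := eqOn_posSMul_of_eqOn hfhom hfhathom hPpos hagree
  rintro p ⟨hp, hp_int⟩
  exact hfconv.eqOn_inter_closure (isOpen_posOrthant d) hfhatconv hcone_pos hcone
    ⟨hp, interior_subset hp_int⟩

/-- Key extension step in Theorem 5.1(iii): two convex, positively homogeneous degree-1
functions agreeing on `P` agree on `ℝ^d_{++} ∩ int(cl(cone(P)))`. -/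
theorem stmt3 (d : ℕ) (hd : 1 ≤ d)
    (f fhat : EuclideanSpace ℝ (Fin d) → ℝ)
    (hfconv : ConvexOn ℝ (posOrthant d) f)
    (hfhatconv : ConvexOn ℝ (posOrthant d) fhat)
    (hfhom : ∀ p ∈ posOrthant d, ∀ l : ℝ, 0 < l → f (l • p) = l * f p)
    (hfhathom : ∀ p ∈ posOrthant d, ∀ l : ℝ, 0 < l → fhat (l • p) = l * fhat p)
    (P : Set (EuclideanSpace ℝ (Fin d))) (hPpos : P ⊆ posOrthant d)
    (hagree : ∀ p ∈ P, f p = fhat p) :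
    ∀ p ∈ posOrthant d ∩ interior (closure {q : EuclideanSpace ℝ (Fin d) |
        ∃ l : ℝ, 0 < l ∧ ∃ r ∈ P, q = l • r}),
      f p = fhat p :=
  stmt3_general d f fhat hfconv hfhatconv hfhom hfhathom P hPpos hagree
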